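/- Under Assumptions A1 and B1, suppose K, Q ∈ ℝ^{d×d_e} satisfy the alignment property (K = U_K Λ_K V^⊤, Q = U_Q Λ_Q V^⊤ with U_K, U_Q, V orthogonal, Λ_K, Λ_Q diagonal, and x_{i,opt(i)}/‖x_{i,opt(i)}‖_2 = u^k_{π(i)}, z_i/‖z_i‖_2 = u^q_{π(i)} for an injective π : [n] → [d]). For each i ∈ [n], set g_i := X_i K Q^⊤ z_i and ψ_i := X_i^⊤ Σ(g_i) γ_i ∈ ℝ^d. Then ψ_i is a strictly positive scalar multiple of x_{i,opt(i)}; in particular ψ_i ≠ 0 and ψ_i/‖ψ_i‖_2 = x_{i,opt(i)}/‖x_{i,opt(i)}‖_2 = u^k_{π(i)}. -/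

import Mathlib

open Real Filter Finset

noncomputable section

namespace AttnGF

/-- Softmax of a vector in `ℝ^L`. -/
def S {L : ℕ} (u : Fin L → ℝ) (l : Fin L) : ℝ := Real.exp (u l) / ∑ j, Real.exp (u j)

/-- Euclidean norm of a vector. -/
def l2 {d : ℕ} (x : Fin d → ℝ) : ℝ := Real.sqrt (∑ j, x j ^ 2)

/-- ℓ1 norm of a vector. -/
def l1 {d : ℕ} (x : Fin d → ℝ) : ℝ := ∑ j, |x j|

variable {n L d de : ℕ}

/-- Token scores γ_{il} = y_i v^⊤ x_{il}. -/
def gam (X : Fin n → Fin L → Fin d → ℝ) (y : Fin n → ℝ) (v : Fin d → ℝ)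
    (i : Fin n) (l : Fin L) : ℝ := y i * ∑ j, v j * X i l j

/-- g_i(β) = X_i (β ⊙ z_i) for the diagonal attention model. -/
def gD (X : Fin n → Fin L → Fin d → ℝ) (z : Fin n → Fin d → ℝ) (i : Fin n)
    (β : Fin d → ℝ) (l : Fin L) : ℝ := ∑ j, X i l j * (β j * z i j)

/-- Empirical exponential loss for the diagonal attention model. -/
def lossD (X : Fin n → Fin L → Fin d → ℝ) (z : Fin n → Fin d → ℝ)
    (y : Fin n → ℝ) (v : Fin d → ℝ) (β : Fin d → ℝ) : ℝ :=
  (1 / (n : ℝ)) * ∑ i, Real.exp (-(∑ l, gam X y v i l * S (gD X z i β) l))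

/-- Constraint vectors B_{il} = z_i ⊙ (x_{i,opt(i)} − x_{il}). -/
def Bv (X : Fin n → Fin L → Fin d → ℝ) (z : Fin n → Fin d → ℝ)
    (opt : Fin n → Fin L) (i : Fin n) (l : Fin L) (j : Fin d) : ℝ :=
  z i j * (X i (opt i) j - X i l j)

/-- (Σ(u) γ)_l where Σ(u) = Diag(S(u)) − S(u) S(u)^⊤. -/
def SigMul {L : ℕ} (u γv : Fin L → ℝ) (l : Fin L) : ℝ :=
  S u l * γv l - S u l * ∑ j, S u j * γv j

/-- j-th component of the gradient (partial derivative) of f at x. -/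
def pD {d : ℕ} (f : (Fin d → ℝ) → ℝ) (x : Fin d → ℝ) (j : Fin d) : ℝ :=
  fderiv ℝ f x (Pi.single j 1)

/-- Assumption A1. -/
def A1 (X : Fin n → Fin L → Fin d → ℝ) (y : Fin n → ℝ) (v : Fin d → ℝ)
    (opt : Fin n → Fin L) (nopt : Fin n → ℝ) : Prop :=
  ∀ i : Fin n, ∀ l : Fin L, l ≠ opt i →
    gam X y v i l < gam X y v i (opt i) ∧ gam X y v i l = nopt i

/-- Feasibility for the ℓ1-SVM. -/
def Feas (X : Fin n → Fin L → Fin d → ℝ) (z : Fin n → Fin d → ℝ)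
    (opt : Fin n → Fin L) (βf : Fin d → ℝ) : Prop :=
  ∀ i : Fin n, ∀ l : Fin L, l ≠ opt i → 1 ≤ ∑ j, βf j * Bv X z opt i l j

/-- Reparametrized gradient flow on (w₊, w₋). -/
def Flow (X : Fin n → Fin L → Fin d → ℝ) (z : Fin n → Fin d → ℝ)
    (y : Fin n → ℝ) (v : Fin d → ℝ) (wp wm : ℝ → Fin d → ℝ) : Prop :=
  ∀ t : ℝ, 0 ≤ t → ∀ j : Fin d,
    HasDerivAt (fun s => wp s j)
      (-(pD (fun u => lossD X z y v (fun k => (u k ^ 2 - wm t k ^ 2) / 2)) (wp t) j)) t ∧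
    HasDerivAt (fun s => wm s j)
      (-(pD (fun u => lossD X z y v (fun k => (wp t k ^ 2 - u k ^ 2) / 2)) (wm t) j)) t

/-- β(t) = (w₊(t)^{⊙2} − w₋(t)^{⊙2})/2. -/
def bCurve (wp wm : ℝ → Fin d → ℝ) (t : ℝ) (j : Fin d) : ℝ :=
  (wp t j ^ 2 - wm t j ^ 2) / 2

/-- Assumption A2 (initial loss bound). -/
def A2 (X : Fin n → Fin L → Fin d → ℝ) (z : Fin n → Fin d → ℝ)
    (y : Fin n → ℝ) (v : Fin d → ℝ) (opt : Fin n → Fin L) (nopt : Fin n → ℝ)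
    (β0 : Fin d → ℝ) : Prop :=
  ∀ jj : Fin n, lossD X z y v β0 ≤
    (Real.exp (-(nopt jj)) +
      ∑ i ∈ Finset.univ.erase jj, Real.exp (-(gam X y v i (opt i)))) / (n : ℝ)

/-- Margin μ(β) = min_{i, l ≠ opt(i)} β^⊤ B_{il}. -/
def margin (X : Fin n → Fin L → Fin d → ℝ) (z : Fin n → Fin d → ℝ)
    (opt : Fin n → Fin L) (β : Fin d → ℝ) : ℝ :=
  sInf {m : ℝ | ∃ i : Fin n, ∃ l : Fin L, l ≠ opt i ∧ m = ∑ j, β j * Bv X z opt i l j}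

/-- φ_{il}(t). -/
def phi (X : Fin n → Fin L → Fin d → ℝ) (z : Fin n → Fin d → ℝ)
    (y : Fin n → ℝ) (v : Fin d → ℝ) (β : ℝ → Fin d → ℝ) (i : Fin n) (l : Fin L)
    (t : ℝ) : ℝ :=
  -(2 / (n : ℝ)) * ∫ τ in (0:ℝ)..t,
    Real.exp (-(∑ l', gam X y v i l' * S (gD X z i (β τ)) l')) *
      SigMul (gD X z i (β τ)) (gam X y v i) l

/-- Dual variables λ_{il}(t) = φ_{il}(t) / ln μ(β(t)). -/
def lam (X : Fin n → Fin L → Fin d → ℝ) (z : Fin n → Fin d → ℝ)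
    (y : Fin n → ℝ) (v : Fin d → ℝ) (opt : Fin n → Fin L) (β : ℝ → Fin d → ℝ)
    (i : Fin n) (l : Fin L) (t : ℝ) : ℝ :=
  (1 / Real.log (margin X z opt (β t))) * phi X z y v β i l t

/-- g_i(K,Q) = X_i K Q^⊤ z_i for the full attention model. -/
def gM (X : Fin n → Fin L → Fin d → ℝ) (z : Fin n → Fin d → ℝ) (i : Fin n)
    (K Q : Fin d → Fin de → ℝ) (l : Fin L) : ℝ :=
  ∑ a, ∑ b, ∑ c, X i l a * K a b * Q c b * z i c

/-- Empirical exponential loss for the full attention model. -/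
def lossM (X : Fin n → Fin L → Fin d → ℝ) (z : Fin n → Fin d → ℝ)
    (y : Fin n → ℝ) (v : Fin d → ℝ) (K Q : Fin d → Fin de → ℝ) : ℝ :=
  (1 / (n : ℝ)) * ∑ i, Real.exp (-(∑ l, gam X y v i l * S (gM X z i K Q) l))

/-- Partial derivative of f with respect to the (a,b) entry of a matrix. -/
def pDM {d de : ℕ} (f : (Fin d → Fin de → ℝ) → ℝ) (M : Fin d → Fin de → ℝ)
    (a : Fin d) (b : Fin de) : ℝ :=
  fderiv ℝ f M (Pi.single a (Pi.single b 1))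

/-- Gradient flow on the key and query matrices. -/
def MFlow (X : Fin n → Fin L → Fin d → ℝ) (z : Fin n → Fin d → ℝ)
    (y : Fin n → ℝ) (v : Fin d → ℝ) (K Q : ℝ → Fin d → Fin de → ℝ) : Prop :=
  ∀ t : ℝ, 0 ≤ t → ∀ (a : Fin d) (b : Fin de),
    HasDerivAt (fun s => K s a b) (-(pDM (fun M => lossM X z y v M (Q t)) (K t) a b)) t ∧
    HasDerivAt (fun s => Q s a b) (-(pDM (fun M => lossM X z y v (K t) M) (Q t) a b)) t

/-- A rectangular matrix is diagonal: zero off the main diagonal. -/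
def RectDiag {d de : ℕ} (M : Fin d → Fin de → ℝ) : Prop :=
  ∀ (a : Fin d) (b : Fin de), (a : ℕ) ≠ (b : ℕ) → M a b = 0

/-- Orthogonality: U^⊤ U = 1. -/
def Orth {d : ℕ} (U : Fin d → Fin d → ℝ) : Prop :=
  ∀ j j' : Fin d, ∑ a, U a j * U a j' = (if j = j' then (1:ℝ) else 0)

/-- Assumption B1, with the pairing of non-optimal tokens given by the involution σ. -/
def B1 (X : Fin n → Fin L → Fin d → ℝ) (z : Fin n → Fin d → ℝ)
    (opt : Fin n → Fin L) (σ : Fin n → Fin L → Fin L) : Prop :=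
  (∀ i j : Fin n, i ≠ j →
    (∑ a, X i (opt i) a * X j (opt j) a = 0) ∧ (∑ a, z i a * z j a = 0)) ∧
  (∀ i, |∑ a, X i (opt i) a * z i a| = l2 (X i (opt i)) * l2 (z i)) ∧
  (∀ i, ∀ l, l ≠ opt i → σ i l ≠ opt i ∧ σ i l ≠ l ∧ σ i (σ i l) = l ∧
    ∃ c : ℝ, -1 ≤ c ∧ c < 1 ∧
      (∑ a, X i (opt i) a * (X i l a - X i (σ i l) a)) = 0 ∧
      (∀ a, X i l a + X i (σ i l) a = 2 * c * X i (opt i) a))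

/-- Rotated constraint vectors B̃_{il}. -/
def Btil (X : Fin n → Fin L → Fin d → ℝ) (z : Fin n → Fin d → ℝ)
    (opt : Fin n → Fin L) (pim : Fin n → Fin d) (i : Fin n) (l : Fin L) (j : Fin d) : ℝ :=
  Real.sign (∑ a, X i (opt i) a * z i a) * (∑ a, (X i (opt i) a - X i l a) * z i a) *
    (if j = pim i then 1 else 0)

/-- Margin with respect to the rotated constraints. -/
def marginB (X : Fin n → Fin L → Fin d → ℝ) (z : Fin n → Fin d → ℝ)
    (opt : Fin n → Fin L) (pim : Fin n → Fin d) (β : Fin d → ℝ) : ℝ :=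
  sInf {m : ℝ | ∃ i : Fin n, ∃ l : Fin L, l ≠ opt i ∧ m = ∑ j, β j * Btil X z opt pim i l j}

/-- Margin for a combined attention weight matrix. -/
def marginM (X : Fin n → Fin L → Fin d → ℝ) (z : Fin n → Fin d → ℝ)
    (opt : Fin n → Fin L) (W : Fin d → Fin d → ℝ) : ℝ :=
  sInf {m : ℝ | ∃ i : Fin n, ∃ l : Fin L, l ≠ opt i ∧
    m = ∑ a, ∑ c, (X i (opt i) a - X i l a) * W a c * z i c}

/-- Nuclear norm ‖W‖_* = trace((W^⊤W)^{1/2}). -/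
def nuclear {d : ℕ} (W : Matrix (Fin d) (Fin d) ℝ) : ℝ :=
  ((Matrix.posSemidef_conjTranspose_mul_self W).1.eigenvectorUnitary.1 *
    Matrix.diagonal ((RCLike.ofReal : ℝ → ℝ) ∘ (√·) ∘ (Matrix.posSemidef_conjTranspose_mul_self W).1.eigenvalues) *
    (star (Matrix.posSemidef_conjTranspose_mul_self W).1.eigenvectorUnitary :
      Matrix (Fin d) (Fin d) ℝ)).trace

end AttnGF

/-!
Under the alignment assumptions `K Qᵀ = U_K (Λ_K Λ_Qᵀ) U_Qᵀ` maps `z_i` to a multiple of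
`x_{i,opt(i)}`, so each score `g_{il}` is a multiple of `⟨x_{il}, x_{i,opt(i)}⟩`, and B1(iii) makes
the softmax weights of the paired tokens `l`, `σ l` equal. Since `γ_i` is constant off `opt(i)`,
`ψ_i = (γ_opt - γ_nopt) S_opt ∑_{l ≠ opt} S_l (x_opt - x_l)`; averaging each pair with
`x_l + x_{σ l} = 2 c_l x_opt` turns the sum into `(∑_{l ≠ opt} S_l (1 - c_l)) x_opt`, whose
coefficient is positive because `c_l < 1`.
-/

open Matrix

namespace AttnGF

lemma sum_smul_sub_of_involution {ι E : Type*} [AddCommGroup E] [Module ℝ E] {s : Finset ι}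
    {σ : ι → ι} (hσ : ∀ l ∈ s, σ l ∈ s ∧ σ (σ l) = l) (w c : ι → ℝ) (hw : ∀ l ∈ s, w (σ l) = w l)
    (x : ι → E) (y : E) (hx : ∀ l ∈ s, x l + x (σ l) = (2 * c l) • y) :
    ∑ l ∈ s, w l • (y - x l) = (∑ l ∈ s, w l * (1 - c l)) • y := by
  have hswap : ∑ l ∈ s, w l • (y - x (σ l)) = ∑ l ∈ s, w l • (y - x l) :=
    calc ∑ l ∈ s, w l • (y - x (σ l)) = ∑ l ∈ s, w (σ l) • (y - x (σ l)) :=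
          sum_congr rfl fun l hl => by rw [hw l hl]
      _ = ∑ l ∈ s, w l • (y - x l) :=
          sum_nbij' σ σ (fun l hl => (hσ l hl).1) (fun l hl => (hσ l hl).1)
            (fun l hl => (hσ l hl).2) (fun l hl => (hσ l hl).2) fun _ _ => rfl
  have hdouble : (2 : ℝ) • ∑ l ∈ s, w l • (y - x l) = (2 : ℝ) • (∑ l ∈ s, w l * (1 - c l)) • y := by
    rw [two_smul]
    nth_rewrite 1 [← hswap]
    rw [← sum_add_distrib, sum_smul, smul_sum]
    refine sum_congr rfl fun l hl => ?_
    rw [eq_sub_of_add_eq' (hx l hl)]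
    module
  exact smul_right_injective E two_ne_zero hdouble

section Softmax

variable {L : ℕ}

lemma S_pos (u : Fin L → ℝ) (l : Fin L) : 0 < S u l :=
  div_pos (exp_pos _) (sum_pos (fun _ _ => exp_pos _) ⟨l, mem_univ l⟩)

lemma sum_S_eq_one [NeZero L] (u : Fin L → ℝ) : ∑ l, S u l = 1 := by
  simp only [S]
  rw [← sum_div, div_self (sum_pos (fun j _ => exp_pos (u j)) univ_nonempty).ne']

lemma sum_sigMul_smul {E : Type*} [AddCommGroup E] [Module ℝ E] (u γ : Fin L → ℝ)
    (x : Fin L → E) {o : Fin L} {γ' : ℝ} (hγ : ∀ l ≠ o, γ l = γ') :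
    ∑ l, SigMul u γ l • x l = ((γ o - γ') * S u o) • ∑ l ∈ univ.erase o, S u l • (x o - x l) := by
  have := NeZero.of_pos o.pos
  have hS : ∑ l ∈ univ.erase o, S u l = 1 - S u o := by
    rw [← sum_S_eq_one u, ← add_sum_erase _ _ (mem_univ o)]; ring
  have hm : ∑ j, S u j * γ j = S u o * γ o + (1 - S u o) * γ' := by
    rw [← add_sum_erase _ _ (mem_univ o), ← hS, sum_mul]
    congr 1
    exact sum_congr rfl fun l hl => by rw [hγ l (ne_of_mem_erase hl)]
  have hoff : ∀ l ∈ univ.erase o, SigMul u γ l • x l = -((γ o - γ') * S u o) • (S u l • x l) := by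
    intro l hl
    rw [SigMul, hm, hγ l (ne_of_mem_erase hl), smul_smul]
    congr 1; ring
  rw [← add_sum_erase _ _ (mem_univ o), sum_congr rfl hoff, ← smul_sum, SigMul, hm]
  simp only [smul_sub, sum_sub_distrib, ← sum_smul, hS]
  module

lemma exists_pos_smul_of_paired {E : Type*} [AddCommGroup E] [Module ℝ E]
    {u γ : Fin L → ℝ} {o : Fin L} {γ' : ℝ} (hγ : ∀ l ≠ o, γ l < γ o ∧ γ l = γ')
    {σ : Fin L → Fin L} (hσ : ∀ l ≠ o, σ l ≠ o ∧ σ (σ l) = l) (hu : ∀ l ≠ o, u (σ l) = u l)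
    (x : Fin L → E) (hx : ∀ l ≠ o, ∃ c : ℝ, c < 1 ∧ x l + x (σ l) = (2 * c) • x o)
    (hL : ∃ l, l ≠ o) :
    ∃ c : ℝ, 0 < c ∧ ∑ l, SigMul u γ l • x l = c • x o := by
  choose! c hc hcx using hx
  obtain ⟨l₀, hl₀⟩ := hL
  have hw : ∀ l ∈ univ.erase o, S u (σ l) = S u l := fun l hl => by
    simp only [S, hu l (ne_of_mem_erase hl)]
  rw [sum_sigMul_smul u γ x fun l hl => (hγ l hl).2,
    sum_smul_sub_of_involution
      (fun l hl => ⟨mem_erase.2 ⟨(hσ l (ne_of_mem_erase hl)).1, mem_univ _⟩,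
        (hσ l (ne_of_mem_erase hl)).2⟩)
      (S u) c hw x (x o) fun l hl => hcx l (ne_of_mem_erase hl)]
  have hgap : 0 < γ o - γ' := sub_pos.2 ((hγ l₀ hl₀).2 ▸ (hγ l₀ hl₀).1)
  have hmass : 0 < ∑ l ∈ univ.erase o, S u l * (1 - c l) :=
    sum_pos (fun l hl => mul_pos (S_pos u l) (sub_pos.2 (hc l (ne_of_mem_erase hl))))
      ⟨l₀, mem_erase.2 ⟨hl₀, mem_univ _⟩⟩
  exact ⟨_, mul_pos (mul_pos hgap (S_pos u o)) hmass, smul_smul _ _ _⟩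

end Softmax

lemma Orth.transpose_mul_self {d : ℕ} {U : Matrix (Fin d) (Fin d) ℝ} (h : Orth U) :
    Uᵀ * U = 1 := by
  ext j j'
  simp only [mul_apply, transpose_apply, h j j', one_apply]

lemma eq_mul_mul_transpose {m k : Type*} [Fintype m] [Fintype k] {K Λ : Matrix m k ℝ}
    {U : Matrix m m ℝ} {V : Matrix k k ℝ} (h : ∀ a b, K a b = ∑ j, ∑ m, U a j * Λ j m * V b m) :
    K = U * Λ * Vᵀ := by
  ext a b
  simp only [h, mul_apply, transpose_apply, sum_mul]
  exact sum_comm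

lemma RectDiag.mul_transpose_apply_of_ne {d de : ℕ} {ΛK ΛQ : Matrix (Fin d) (Fin de) ℝ}
    (hK : RectDiag ΛK) (hQ : RectDiag ΛQ) {a j : Fin d} (h : a ≠ j) :
    (ΛK * ΛQᵀ) a j = 0 := by
  rw [mul_apply]
  refine sum_eq_zero fun m _ => ?_
  by_cases ham : (a : ℕ) = m
  · rw [transpose_apply, hQ j m fun hjm => h (Fin.ext (ham.trans hjm.symm)), mul_zero]
  · rw [hK a m ham, zero_mul]

lemma mul_transpose_of_common_right {m m' k k' R : Type*} [Fintype m'] [Fintype k] [Fintype k']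
    [DecidableEq k] [CommRing R] (UK UQ : Matrix m m' R) (ΛK ΛQ : Matrix m' k R)
    {V : Matrix k' k R} (hV : Vᵀ * V = 1) :
    UK * ΛK * Vᵀ * (UQ * ΛQ * Vᵀ)ᵀ = UK * (ΛK * ΛQᵀ) * UQᵀ := by
  simp only [transpose_mul, transpose_transpose, Matrix.mul_assoc]
  rw [← Matrix.mul_assoc Vᵀ V, hV, Matrix.one_mul]

lemma mul_mul_transpose_mulVec_col {m R : Type*} [Fintype m] [DecidableEq m] [CommRing R]
    (U D : Matrix m m R) {W : Matrix m m R} (hW : Wᵀ * W = 1) {j : m}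
    (hD : ∀ a ≠ j, D a j = 0) :
    (U * D * Wᵀ) *ᵥ W.col j = D j j • U.col j := by
  have hDcol : D *ᵥ Pi.single j 1 = D j j • Pi.single j 1 := by
    ext a
    by_cases h : a = j
    · subst h; simp
    · simp [h, hD a h]
  rw [← mulVec_single_one, mulVec_mulVec, Matrix.mul_assoc, hW, Matrix.mul_one,
    ← mulVec_mulVec, hDcol, mulVec_smul, mulVec_single_one]

lemma l2_pos {d : ℕ} {x : Fin d → ℝ} (hx : x ≠ 0) : 0 < l2 x := by
  obtain ⟨j, hj⟩ := Function.ne_iff.mp hx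
  exact sqrt_pos.2 (sum_pos' (fun k _ => sq_nonneg _) ⟨j, mem_univ j, pow_two_pos_of_ne_zero hj⟩)

lemma l2_smul {d : ℕ} (c : ℝ) (x : Fin d → ℝ) : l2 (c • x) = |c| * l2 x := by
  simp only [l2, Pi.smul_apply, smul_eq_mul, mul_pow, ← mul_sum]
  rw [sqrt_mul (sq_nonneg c), sqrt_sq_eq_abs]

lemma gM_eq_dotProduct {n L d de : ℕ} (X : Fin n → Fin L → Fin d → ℝ) (z : Fin n → Fin d → ℝ)
    (i : Fin n) (K Q : Matrix (Fin d) (Fin de) ℝ) (l : Fin L) :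
    gM X z i K Q l = X i l ⬝ᵥ ((K * Qᵀ) *ᵥ z i) := by
  simp only [gM, dotProduct, mulVec, mul_apply, transpose_apply, mul_sum, sum_mul]
  refine sum_congr rfl fun a _ => ?_
  rw [sum_comm]
  exact sum_congr rfl fun b _ => sum_congr rfl fun c _ => by ring

lemma exists_gM_eq_mul_dotProduct {n L d de : ℕ} {X : Fin n → Fin L → Fin d → ℝ}
    {z : Fin n → Fin d → ℝ} {i : Fin n} {K Q ΛK ΛQ : Matrix (Fin d) (Fin de) ℝ}
    {UK UQ : Matrix (Fin d) (Fin d) ℝ} {V : Matrix (Fin de) (Fin de) ℝ} (hUQ : Orth UQ) (hV : Orth V)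
    (hΛK : RectDiag ΛK) (hΛQ : RectDiag ΛQ)
    (hK : ∀ a b, K a b = ∑ j, ∑ m, UK a j * ΛK j m * V b m)
    (hQ : ∀ a b, Q a b = ∑ j, ∑ m, UQ a j * ΛQ j m * V b m)
    {x : Fin d → ℝ} {j : Fin d} (hx : ∀ a, x a / l2 x = UK a j)
    (hz : ∀ a, z i a / l2 (z i) = UQ a j) (hz0 : z i ≠ 0) :
    ∃ κ : ℝ, ∀ l, gM X z i K Q l = κ * (X i l ⬝ᵥ x) := by
  have hzcol : z i = l2 (z i) • UQ.col j := funext fun a => by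
    rw [Pi.smul_apply, col_apply, ← hz a, smul_eq_mul, mul_div_cancel₀ _ (l2_pos hz0).ne']
  have hxcol : UK.col j = (l2 x)⁻¹ • x := funext fun a => by
    rw [col_apply, ← hx a, Pi.smul_apply, smul_eq_mul, div_eq_inv_mul]
  have hKQ : (K * Qᵀ) *ᵥ z i = (l2 (z i) * (ΛK * ΛQᵀ) j j * (l2 x)⁻¹) • x := by
    rw [eq_mul_mul_transpose hK, eq_mul_mul_transpose hQ,
      mul_transpose_of_common_right _ _ _ _ hV.transpose_mul_self]
    conv_lhs => rw [hzcol]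
    rw [mulVec_smul,
      mul_mul_transpose_mulVec_col _ _ hUQ.transpose_mul_self
        fun a ha => hΛK.mul_transpose_apply_of_ne hΛQ ha,
      hxcol, smul_smul, smul_smul]
  exact ⟨_, fun l => by rw [gM_eq_dotProduct, hKQ, dotProduct_smul, smul_eq_mul]⟩

theorem statement18_general {n L d de : ℕ} (hL : 2 ≤ L)
    (X : Fin n → Fin L → Fin d → ℝ) (z : Fin n → Fin d → ℝ)
    (y : Fin n → ℝ) (v : Fin d → ℝ)
    (opt : Fin n → Fin L) (nopt : Fin n → ℝ)
    (hA1 : A1 X y v opt nopt)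
    (σ : Fin n → Fin L → Fin L) (hB1 : B1 X z opt σ)
    (hx0 : ∀ i : Fin n, X i (opt i) ≠ 0) (hz0 : ∀ i : Fin n, z i ≠ 0)
    (K Q : Fin d → Fin de → ℝ)
    (UK UQ : Fin d → Fin d → ℝ) (V : Fin de → Fin de → ℝ)
    (hUQ : Orth UQ) (hV : Orth V)
    (pim : Fin n → Fin d)
    (hcolK : ∀ (i : Fin n) (a : Fin d),
      X i (opt i) a / l2 (X i (opt i)) = UK a (pim i))
    (hcolQ : ∀ (i : Fin n) (a : Fin d),
      z i a / l2 (z i) = UQ a (pim i))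
    (ΛK ΛQ : Fin d → Fin de → ℝ) (hΛK : RectDiag ΛK) (hΛQ : RectDiag ΛQ)
    (hK : ∀ (a : Fin d) (b : Fin de),
      K a b = ∑ j, ∑ m, UK a j * ΛK j m * V b m)
    (hQ : ∀ (a : Fin d) (b : Fin de),
      Q a b = ∑ j, ∑ m, UQ a j * ΛQ j m * V b m) :
    ∀ i : Fin n,
      (∃ c : ℝ, 0 < c ∧ ∀ a : Fin d,
        (∑ l, X i l a * SigMul (gM X z i K Q) (gam X y v i) l) = c * X i (opt i) a) ∧
      (fun a => ∑ l, X i l a * SigMul (gM X z i K Q) (gam X y v i) l) ≠ 0 ∧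
      (∀ a : Fin d,
        (∑ l, X i l a * SigMul (gM X z i K Q) (gam X y v i) l) /
            l2 (fun a' => ∑ l, X i l a' * SigMul (gM X z i K Q) (gam X y v i) l) =
          X i (opt i) a / l2 (X i (opt i)) ∧
        (∑ l, X i l a * SigMul (gM X z i K Q) (gam X y v i) l) /
            l2 (fun a' => ∑ l, X i l a' * SigMul (gM X z i K Q) (gam X y v i) l) =
          UK a (pim i)) := by
  intro i
  obtain ⟨κ, hg⟩ := exists_gM_eq_mul_dotProduct (X := X) hUQ hV hΛK hΛQ hK hQ (hcolK i) (hcolQ i)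
    (hz0 i)
  have hpair := hB1.2.2 i
  obtain ⟨c, hc, hψ⟩ : ∃ c : ℝ, 0 < c ∧
      ∑ l, SigMul (gM X z i K Q) (gam X y v i) l • X i l = c • X i (opt i) := by
    refine exists_pos_smul_of_paired (hA1 i) (fun l hl => ⟨(hpair l hl).1, (hpair l hl).2.2.1⟩)
      (fun l hl => ?_) (X i) (fun l hl => ?_)
      (Fintype.exists_ne_of_one_lt_card (by rw [Fintype.card_fin]; omega) _)
    · obtain ⟨-, -, -, -, -, -, horth, -⟩ := hpair l hl
      rw [hg, hg, eq_comm, ← sub_eq_zero, ← mul_sub, ← sub_dotProduct, dotProduct_comm]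
      exact mul_eq_zero_of_right κ horth
    · obtain ⟨-, -, -, c, -, hc, -, hsum⟩ := hpair l hl
      exact ⟨c, hc, funext fun a => by simp [hsum a]⟩
  have hψa : ∀ a, ∑ l, X i l a * SigMul (gM X z i K Q) (gam X y v i) l = c * X i (opt i) a :=
    fun a => by simpa [Finset.sum_apply, mul_comm] using congrFun hψ a
  have hdir : ∀ a, c * X i (opt i) a / l2 (c • X i (opt i)) = X i (opt i) a / l2 (X i (opt i)) :=
    fun a => by rw [l2_smul, abs_of_pos hc, mul_div_mul_left _ _ hc.ne']
  simp only [hψa]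
  exact ⟨⟨c, hc, fun _ => rfl⟩, smul_ne_zero hc.ne' (hx0 i),
    fun a => ⟨hdir a, (hdir a).trans (hcolK i a)⟩⟩

/-- under alignment, ψ_i = X_i^⊤ Σ(g_i) γ_i is a strictly positive multiple
of the optimal token; in particular it is nonzero and has the same direction. -/
theorem statement18 {n L d de : ℕ} (hL : 2 ≤ L)
    (X : Fin n → Fin L → Fin d → ℝ) (z : Fin n → Fin d → ℝ)
    (y : Fin n → ℝ) (v : Fin d → ℝ)
    (opt : Fin n → Fin L) (nopt : Fin n → ℝ)
    (hA1 : A1 X y v opt nopt)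
    (σ : Fin n → Fin L → Fin L) (hB1 : B1 X z opt σ)
    (hx0 : ∀ i : Fin n, X i (opt i) ≠ 0) (hz0 : ∀ i : Fin n, z i ≠ 0)
    (K Q : Fin d → Fin de → ℝ)
    (UK UQ : Fin d → Fin d → ℝ) (V : Fin de → Fin de → ℝ)
    (hUK : Orth UK) (hUQ : Orth UQ) (hV : Orth V)
    (pim : Fin n → Fin d) (hpim : Function.Injective pim)
    (hcolK : ∀ (i : Fin n) (a : Fin d),
      X i (opt i) a / l2 (X i (opt i)) = UK a (pim i))
    (hcolQ : ∀ (i : Fin n) (a : Fin d),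
      z i a / l2 (z i) = UQ a (pim i))
    (ΛK ΛQ : Fin d → Fin de → ℝ) (hΛK : RectDiag ΛK) (hΛQ : RectDiag ΛQ)
    (hK : ∀ (a : Fin d) (b : Fin de),
      K a b = ∑ j, ∑ m, UK a j * ΛK j m * V b m)
    (hQ : ∀ (a : Fin d) (b : Fin de),
      Q a b = ∑ j, ∑ m, UQ a j * ΛQ j m * V b m) :
    ∀ i : Fin n,
      (∃ c : ℝ, 0 < c ∧ ∀ a : Fin d,
        (∑ l, X i l a * SigMul (gM X z i K Q) (gam X y v i) l) = c * X i (opt i) a) ∧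
      (fun a => ∑ l, X i l a * SigMul (gM X z i K Q) (gam X y v i) l) ≠ 0 ∧
      (∀ a : Fin d,
        (∑ l, X i l a * SigMul (gM X z i K Q) (gam X y v i) l) /
            l2 (fun a' => ∑ l, X i l a' * SigMul (gM X z i K Q) (gam X y v i) l) =
          X i (opt i) a / l2 (X i (opt i)) ∧
        (∑ l, X i l a * SigMul (gM X z i K Q) (gam X y v i) l) /
            l2 (fun a' => ∑ l, X i l a' * SigMul (gM X z i K Q) (gam X y v i) l) =
          UK a (pim i)) :=
  statement18_general hL X z y v opt nopt hA1 σ hB1 hx0 hz0 K Q UK UQ V hUQ hV pim hcolK hcolQ ΛK ΛQ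
    hΛK hΛQ hK hQ

end AttnGF
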